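/- arXiv:1104.1333 — 7 statements merged into one kernel-verified Lean document; each statement's English description precedes it below -/
import Mathlib

section
/- Let C be a composition algebra and D a proper finite-dimensional composition subalgebra of C. For any a in the orthogonal complement of D with Q(a) ≠ 0, the subspace D ⊕ Da is a composition subalgebra of C, and the product is given by (x + ya)(u + va) = (xu - Q(a)·v̄y) + (vx + yū)a for x, y, u, v in D. -/
open QuadraticMap

/-- A composition algebra structure on `V` over `F`: a (not necessarily associative)
unital bilinear multiplication together with a multiplicative quadratic form whose
polar bilinear form is nondegenerate. -/
structure CompAlg (F : Type*) [Field F] (V : Type*) [AddCommGroup V] [Module F V] where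
  Q : QuadraticForm F V
  mul : V → V → V
  one : V
  mul_add_left : ∀ x y z : V, mul (x + y) z = mul x z + mul y z
  mul_add_right : ∀ x y z : V, mul x (y + z) = mul x y + mul x z
  mul_smul_left : ∀ (a : F) (x y : V), mul (a • x) y = a • mul x y
  mul_smul_right : ∀ (a : F) (x y : V), mul x (a • y) = a • mul x y
  one_mul : ∀ x : V, mul one x = x
  mul_one : ∀ x : V, mul x one = x
  norm_mul : ∀ x y : V, Q (mul x y) = Q x * Q y
  nondeg : ∀ x : V, (∀ y : V, polar (⇑Q) y x = 0) → x = 0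

namespace CompAlg

variable {F : Type*} [Field F] {V : Type*} [AddCommGroup V] [Module F V]

/-- The associated bilinear form `f(x,y) = Q(x+y) - Q(x) - Q(y)`. -/
def f (A : CompAlg F V) (x y : V) : F := A.Q (x + y) - A.Q x - A.Q y

/-- Conjugation `x̄ = f(x,1)·1 - x`. -/
def conj (A : CompAlg F V) (x : V) : V := A.f x A.one • A.one - x

end CompAlg

namespace CompAlg

variable {F : Type*} [Field F] {V : Type*} [AddCommGroup V] [Module F V]
variable (A : CompAlg F V)

lemma f_polar (x y : V) : A.f x y = polar (⇑A.Q) x y := rfl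

lemma f_comm (x y : V) : A.f x y = A.f y x := by simp only [CompAlg.f, add_comm x y]; ring

lemma f_add_left (x y z : V) : A.f (x + y) z = A.f x z + A.f y z := by
  simp only [f_polar]; exact polar_add_left A.Q x y z

lemma f_add_right (x y z : V) : A.f x (y + z) = A.f x y + A.f x z := by
  simp only [f_polar]; exact polar_add_right A.Q x y z

lemma f_smul_left (c : F) (x y : V) : A.f (c • x) y = c * A.f x y := by
  simp only [f_polar]; exact polar_smul_left A.Q c x y

lemma f_smul_right (c : F) (x y : V) : A.f x (c • y) = c * A.f x y := by
  simp only [f_polar]; exact polar_smul_right A.Q c x y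

lemma f_sub_left (x y z : V) : A.f (x - y) z = A.f x z - A.f y z := by
  simp only [f_polar]; exact polar_sub_left A.Q x y z

lemma f_sub_right (x y z : V) : A.f x (y - z) = A.f x y - A.f x z := by
  simp only [f_polar]; exact polar_sub_right A.Q x y z

lemma f_neg_right (x y : V) : A.f x (-y) = -A.f x y := by
  simp only [f_polar]; exact polar_neg_right A.Q x y

lemma f_zero_left (y : V) : A.f 0 y = 0 := by
  simp only [f_polar]; exact polar_zero_left A.Q y

lemma mul_zero_left (y : V) : A.mul 0 y = 0 := by
  have := A.mul_smul_left 0 0 y; simpa using this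

lemma mul_zero_right (x : V) : A.mul x 0 = 0 := by
  have := A.mul_smul_right 0 x 0; simpa using this

lemma mul_neg_left (x y : V) : A.mul (-x) y = -A.mul x y := by
  have := A.mul_smul_left (-1) x y; simpa using this

lemma mul_sub_left (x y z : V) : A.mul (x - y) z = A.mul x z - A.mul y z := by
  rw [sub_eq_add_neg, A.mul_add_left, A.mul_neg_left, ← sub_eq_add_neg]

lemma mul_neg_right (x y : V) : A.mul x (-y) = -A.mul x y := by
  have := A.mul_smul_right (-1) x y; simpa using this

lemma mul_sub_right (x y z : V) : A.mul x (y - z) = A.mul x y - A.mul x z := by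
  rw [sub_eq_add_neg, A.mul_add_right, A.mul_neg_right, ← sub_eq_add_neg]

/-- Cancellation from nondegeneracy. -/
lemma cancel {p q : V} (h : ∀ z : V, A.f z p = A.f z q) : p = q := by
  have h0 : p - q = 0 := by
    apply A.nondeg
    intro z
    rw [← A.f_polar, A.f_sub_right, h z, sub_self]
  exact sub_eq_zero.mp h0

lemma N1 (x y z : V) : A.f (A.mul x y) (A.mul x z) = A.Q x * A.f y z := by
  simp only [CompAlg.f, ← A.mul_add_right, A.norm_mul]
  ring

lemma N2 (x y z : V) : A.f (A.mul x y) (A.mul z y) = A.f x z * A.Q y := by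
  simp only [CompAlg.f, ← A.mul_add_left, A.norm_mul]
  ring

lemma E1 (p q r s : V) :
    A.f (A.mul p q) (A.mul r s) + A.f (A.mul r q) (A.mul p s) = A.f p r * A.f q s := by
  have h := A.N1 (p + r) q s
  rw [A.mul_add_left, A.mul_add_left, A.f_add_left, A.f_add_right, A.f_add_right] at h
  have hp := A.N1 p q s
  have hr := A.N1 r q s
  have hQ : A.Q (p + r) = A.Q p + A.Q r + A.f p r := by
    simp only [CompAlg.f]; ring
  rw [hQ] at h
  linear_combination h - hp - hr

lemma E2 (p q r s : V) :
    A.f (A.mul p q) (A.mul r s) + A.f (A.mul p s) (A.mul r q) = A.f p r * A.f q s := by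
  have h := A.N2 p (q + s) r
  rw [A.mul_add_right, A.mul_add_right, A.f_add_left, A.f_add_right, A.f_add_right] at h
  have hp := A.N2 p q r
  have hr := A.N2 p s r
  have hQ : A.Q (q + s) = A.Q q + A.Q s + A.f q s := by
    simp only [CompAlg.f]; ring
  rw [hQ] at h
  linear_combination h - hp - hr

lemma L3a (x y z : V) :
    A.f (A.mul x y) z = A.f x A.one * A.f y z - A.f y (A.mul x z) := by
  have h := A.E1 x y A.one z
  rw [A.one_mul, A.one_mul] at h
  linear_combination h

end CompAlg

/-- doubling. If `D` is a proper finite-dimensional composition subalgebra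
of a composition algebra and `a ∈ D^⊥` has `Q(a) ≠ 0`, then `D ⊕ Da` is a composition
subalgebra, with product `(x+ya)(u+va) = (xu - Q(a)·v̄y) + (vx + yū)a`. -/
theorem stmt2 {F : Type*} [Field F] {V : Type*} [AddCommGroup V] [Module F V]
    (A : CompAlg F V) (h2 : (2 : F) ≠ 0)
    (D : Submodule F V) (hD1 : A.one ∈ D)
    (hDmul : ∀ x ∈ D, ∀ y ∈ D, A.mul x y ∈ D)
    (hDnd : ∀ x ∈ D, (∀ y ∈ D, A.f y x = 0) → x = 0)
    (hDfin : FiniteDimensional F D)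
    (hDproper : D ≠ ⊤)
    (a : V) (ha : ∀ x ∈ D, A.f a x = 0) (hQa : A.Q a ≠ 0) :
    -- the doubling product formula
    (∀ x ∈ D, ∀ y ∈ D, ∀ u ∈ D, ∀ v ∈ D,
      A.mul (x + A.mul y a) (u + A.mul v a)
        = (A.mul x u - A.Q a • A.mul (A.conj v) y) + A.mul (A.mul v x + A.mul y (A.conj u)) a) ∧
    -- `D ⊕ Da` is closed under multiplication
    (∀ z w : V, (∃ x ∈ D, ∃ y ∈ D, z = x + A.mul y a) →
      (∃ x ∈ D, ∃ y ∈ D, w = x + A.mul y a) →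
      ∃ x ∈ D, ∃ y ∈ D, A.mul z w = x + A.mul y a) ∧
    -- the quadratic form is nondegenerate on `D ⊕ Da`
    (∀ z : V, (∃ x ∈ D, ∃ y ∈ D, z = x + A.mul y a) →
      (∀ w : V, (∃ x ∈ D, ∃ y ∈ D, w = x + A.mul y a) → A.f z w = 0) → z = 0) := by
  -- `Da ⊥ D`
  have horth : ∀ w ∈ D, ∀ u ∈ D, A.f (A.mul w a) u = 0 := by
    intro w hw u hu
    rw [A.L3a, ha u hu, ha _ (hDmul w hw u hu)]; ring
  have hconjD : ∀ u ∈ D, A.conj u ∈ D := fun u hu =>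
    D.sub_mem (D.smul_mem _ hD1) hu
  have keyA : ∀ x ∈ D, ∀ v ∈ D, ∀ z : V,
      A.f (A.mul x (A.mul v a)) z = A.f (A.mul v a) (A.mul z x) := by
    intro x hx v hv z
    have h1 := A.E1 x (A.mul v a) z A.one
    rw [A.mul_one, A.mul_one, horth v hv A.one hD1] at h1
    have h2 := A.L3a z (A.mul v a) x
    rw [horth v hv x hx] at h2
    linear_combination h1 - h2
  have keyB : ∀ x ∈ D, ∀ v ∈ D, ∀ z : V,
      A.f (A.mul (A.mul v x) a) z = A.f (A.mul v a) (A.mul z x) := by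
    intro x hx v hv z
    have h1 := A.E1 (A.mul v x) a z A.one
    rw [A.mul_one, A.mul_one, ha A.one hD1,
        A.f_comm (A.mul z a) (A.mul v x)] at h1
    have h2 := A.E2 v x z a
    rw [A.f_comm x a, ha x hx] at h2
    linear_combination h1 - h2
  have pA : ∀ x ∈ D, ∀ v ∈ D, A.mul x (A.mul v a) = A.mul (A.mul v x) a := by
    intro x hx v hv
    apply A.cancel
    intro z
    rw [A.f_comm z (A.mul x (A.mul v a)), keyA x hx v hv z,
        A.f_comm z (A.mul (A.mul v x) a), keyB x hx v hv z]
  have pB : ∀ y ∈ D, ∀ u ∈ D, A.mul (A.mul y a) u = A.mul (A.mul y (A.conj u)) a := by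
    intro y hy u hu
    apply A.cancel
    intro z
    have h1 := A.E2 (A.mul y a) u z A.one
    rw [A.mul_one, A.mul_one] at h1
    have hexp : A.mul y (A.conj u) = A.f u A.one • y - A.mul y u := by
      rw [CompAlg.conj, A.mul_sub_right, A.mul_smul_right, A.mul_one]
    rw [A.f_comm z (A.mul (A.mul y a) u), A.f_comm z (A.mul (A.mul y (A.conj u)) a),
        hexp, A.mul_sub_left, A.mul_smul_left, A.f_sub_left, A.f_smul_left,
        keyB u hu y hy z]
    linear_combination h1
  have pC : ∀ y ∈ D, ∀ v ∈ D,
      A.mul (A.mul y a) (A.mul v a) = -(A.Q a • A.mul (A.conj v) y) := by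
    intro y hy v hv
    apply A.cancel
    intro z
    have h1 := A.E2 (A.mul y a) (A.mul v a) z A.one
    rw [A.mul_one, A.mul_one, horth v hv A.one hD1,
        A.f_comm (A.mul y a) (A.mul z (A.mul v a))] at h1
    have h2 := A.E1 z (A.mul v a) y a
    have h3 : A.f (A.mul v a) a = A.f v A.one * A.Q a := by
      have h := A.N2 v a A.one
      rwa [A.one_mul] at h
    rw [pA y hy v hv, A.N2, h3] at h2
    have hexp : A.mul (A.conj v) y = A.f v A.one • y - A.mul v y := by
      rw [CompAlg.conj, A.mul_sub_left, A.mul_smul_left, A.one_mul]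
    rw [A.f_comm z (A.mul (A.mul y a) (A.mul v a)), A.f_neg_right, A.f_smul_right,
        hexp, A.f_sub_right, A.f_smul_right, A.f_comm z (A.mul v y)]
    linear_combination h1 - h2
  have formula : ∀ x ∈ D, ∀ y ∈ D, ∀ u ∈ D, ∀ v ∈ D,
      A.mul (x + A.mul y a) (u + A.mul v a)
        = (A.mul x u - A.Q a • A.mul (A.conj v) y)
          + A.mul (A.mul v x + A.mul y (A.conj u)) a := by
    intro x hx y hy u hu v hv
    rw [A.mul_add_left, A.mul_add_right, A.mul_add_right,
        pA x hx v hv, pB y hy u hu, pC y hy v hv, A.mul_add_left]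
    abel
  refine ⟨formula, ?_, ?_⟩
  · rintro z w ⟨x, hx, y, hy, rfl⟩ ⟨u, hu, v, hv, rfl⟩
    refine ⟨A.mul x u - A.Q a • A.mul (A.conj v) y,
      D.sub_mem (hDmul x hx u hu) (D.smul_mem _ (hDmul _ (hconjD v hv) y hy)),
      A.mul v x + A.mul y (A.conj u),
      D.add_mem (hDmul v hv x hx) (hDmul y hy _ (hconjD u hu)),
      formula x hx y hy u hu v hv⟩
  · rintro z ⟨x, hx, y, hy, rfl⟩ h
    have hx0 : x = 0 := by
      apply hDnd x hx
      intro u hu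
      have h1 := h u ⟨u, hu, 0, D.zero_mem, by rw [A.mul_zero_left, add_zero]⟩
      rw [A.f_add_left, horth y hy u hu, add_zero] at h1
      rw [A.f_comm]; exact h1
    have hy0 : y = 0 := by
      apply hDnd y hy
      intro v hv
      have h1 := h (A.mul v a) ⟨0, D.zero_mem, v, hv, (zero_add _).symm⟩
      rw [hx0, zero_add, A.N2] at h1
      rcases mul_eq_zero.mp h1 with h' | h'
      · rw [A.f_comm]; exact h'
      · exact absurd h' hQa
    rw [hx0, hy0, A.mul_zero_left, add_zero]
end

section
/- Let Γ be a group of order 2 or 3 acting on a finite-dimensional symplectic space V over 𝔽_p (p ≠ 2, 3), preserving the symplectic form. Then V decomposes as the orthogonal direct sum V = V₁ ⊕ V_s of the fixed subspace V₁ = V^Γ and a Γ-stable complement, and for every Γ-stable subspace X of V, the orthogonal complement of X^Γ inside V^Γ equals (X^⊥)^Γ. -/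
theorem aux8 (p : ℕ) [Fact p.Prime]
    (V : Type*) [AddCommGroup V] [Module (ZMod p) V]
    (B : LinearMap.BilinForm (ZMod p) V)
    (s : V ≃ₗ[ZMod p] V)
    (π : V →ₗ[ZMod p] V)
    (h1 : ∀ x, s (π x) = π x)
    (h2 : ∀ x, s x = x → π x = x)
    (h3 : ∀ x, π (s x) = π x)
    (h4 : ∀ v x : V, s v = v → B v (π x) = B v x)
    (h5 : ∀ X : Submodule (ZMod p) V, (∀ x ∈ X, s x ∈ X) → ∀ x ∈ X, π x ∈ X) :
    (∃ Vs : Submodule (ZMod p) V,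
        IsCompl (LinearMap.ker ((s : V →ₗ[ZMod p] V) - LinearMap.id)) Vs ∧
        (∀ x ∈ Vs, s x ∈ Vs) ∧
        (∀ x : V, s x = x → ∀ y ∈ Vs, B x y = 0)) ∧
    (∀ X : Submodule (ZMod p) V, (∀ x ∈ X, s x ∈ X) →
        {v : V | s v = v ∧ ∀ x ∈ X, s x = x → B v x = 0}
          = {v : V | s v = v ∧ ∀ x ∈ X, B v x = 0}) := by
  have hmem : ∀ x : V, x ∈ LinearMap.ker ((s : V →ₗ[ZMod p] V) - LinearMap.id) ↔ s x = x := by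
    intro x
    simp [LinearMap.mem_ker, sub_eq_zero]
  constructor
  · refine ⟨LinearMap.ker π, ⟨?_, ?_⟩, ?_, ?_⟩
    · rw [Submodule.disjoint_def]
      intro x hx hx'
      rw [hmem] at hx
      rw [LinearMap.mem_ker] at hx'
      rw [← h2 x hx, hx']
    · rw [codisjoint_iff, eq_top_iff]
      intro x _
      refine Submodule.mem_sup.mpr ⟨π x, ?_, x - π x, ?_, by abel⟩
      · rw [hmem]; exact h1 x
      · rw [LinearMap.mem_ker, map_sub, h2 (π x) (h1 x), sub_self]
    · intro x hx
      rw [LinearMap.mem_ker] at hx ⊢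
      rw [h3, hx]
    · intro x hx y hy
      rw [LinearMap.mem_ker] at hy
      have := h4 x y hx
      rw [hy] at this
      simpa using this.symm
  · intro X hX
    ext v
    simp only [Set.mem_setOf_eq]
    constructor
    · rintro ⟨hv, h⟩
      refine ⟨hv, fun x hx => ?_⟩
      rw [← h4 v x hv]
      exact h (π x) (h5 X hX x hx) (h1 x)
    · rintro ⟨hv, h⟩
      exact ⟨hv, fun x hx _ => h x hx⟩

/-- let `Γ = ⟨s⟩` of order 2 or 3 act on a finite-dimensional symplectic
space `V` over `𝔽_p` (`p ≠ 2, 3`), preserving the form. Then `V` is the orthogonal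
direct sum of the fixed subspace `V^Γ` and a `Γ`-stable complement, and for every
`Γ`-stable subspace `X`, the orthogonal of `X^Γ` inside `V^Γ` equals `(X^⊥)^Γ`. -/
theorem stmt8 (p : ℕ) [Fact p.Prime] (hp2 : p ≠ 2) (hp3 : p ≠ 3)
    (V : Type*) [AddCommGroup V] [Module (ZMod p) V] [FiniteDimensional (ZMod p) V]
    (B : LinearMap.BilinForm (ZMod p) V)
    (halt : ∀ x : V, B x x = 0)
    (hnd : B.Nondegenerate)
    (s : V ≃ₗ[ZMod p] V)
    (horder : s ^ 2 = 1 ∨ s ^ 3 = 1)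
    (hinv : ∀ x y : V, B (s x) (s y) = B x y) :
    (∃ Vs : Submodule (ZMod p) V,
        IsCompl (LinearMap.ker ((s : V →ₗ[ZMod p] V) - LinearMap.id)) Vs ∧
        (∀ x ∈ Vs, s x ∈ Vs) ∧
        (∀ x : V, s x = x → ∀ y ∈ Vs, B x y = 0)) ∧
    (∀ X : Submodule (ZMod p) V, (∀ x ∈ X, s x ∈ X) →
        {v : V | s v = v ∧ ∀ x ∈ X, s x = x → B v x = 0}
          = {v : V | s v = v ∧ ∀ x ∈ X, B v x = 0}) := by
  have hp := Fact.out (p := p.Prime)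
  rcases horder with h | h
  · -- order 2
    have hs2 : ∀ x : V, s (s x) = x := by
      intro x
      have := DFunLike.congr_fun h x
      simpa [pow_succ] using this
    have h2ne : (2 : ZMod p) ≠ 0 := by
      intro hz
      rw [show (2 : ZMod p) = ((2 : ℕ) : ZMod p) by norm_cast,
        ZMod.natCast_eq_zero_iff] at hz
      exact hp2 ((Nat.prime_dvd_prime_iff_eq hp Nat.prime_two).mp hz)
    set c : ZMod p := (2 : ZMod p)⁻¹ with hc
    have hc2 : c * 2 = 1 := by
      rw [hc]; field_simp
    set π : V →ₗ[ZMod p] V := c • (LinearMap.id + (s : V →ₗ[ZMod p] V)) with hπ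
    have hπx : ∀ x : V, π x = c • (x + s x) := by
      intro x; simp [hπ]
    have h1 : ∀ x, s (π x) = π x := by
      intro x
      rw [hπx, map_smul, map_add, hs2]
      congr 1
      abel
    have h2 : ∀ x, s x = x → π x = x := by
      intro x hx
      rw [hπx, hx, ← two_smul (ZMod p) x, smul_smul, hc2, one_smul]
    have h3 : ∀ x, π (s x) = π x := by
      intro x
      rw [hπx, hs2, hπx, add_comm]
    have h4 : ∀ v x : V, s v = v → B v (π x) = B v x := by
      intro v x hv
      have hsx : B v (s x) = B v x := by
        conv_lhs => rw [← hv]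
        exact hinv v x
      rw [hπx, map_smul, map_add, hsx, smul_eq_mul, ← two_mul, ← mul_assoc, hc2, one_mul]
    have h5 : ∀ X : Submodule (ZMod p) V, (∀ x ∈ X, s x ∈ X) → ∀ x ∈ X, π x ∈ X := by
      intro X hX x hx
      rw [hπx]
      exact X.smul_mem c (X.add_mem hx (hX x hx))
    exact aux8 p V B s π h1 h2 h3 h4 h5
  · -- order 3
    have hs3 : ∀ x : V, s (s (s x)) = x := by
      intro x
      have := DFunLike.congr_fun h x
      simpa [pow_succ] using this
    have h3ne : (3 : ZMod p) ≠ 0 := by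
      intro hz
      rw [show (3 : ZMod p) = ((3 : ℕ) : ZMod p) by norm_cast,
        ZMod.natCast_eq_zero_iff] at hz
      exact hp3 ((Nat.prime_dvd_prime_iff_eq hp Nat.prime_three).mp hz)
    set c : ZMod p := (3 : ZMod p)⁻¹ with hc
    have hc3 : c * 3 = 1 := by
      rw [hc]; field_simp
    set π : V →ₗ[ZMod p] V :=
      c • (LinearMap.id + (s : V →ₗ[ZMod p] V) + (s : V →ₗ[ZMod p] V) ∘ₗ (s : V →ₗ[ZMod p] V))
      with hπ
    have hπx : ∀ x : V, π x = c • (x + s x + s (s x)) := by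
      intro x; simp [hπ]
    have hthree : ∀ x : V, x + x + x = (3 : ZMod p) • x := by
      intro x
      have : x + x + x = (3 : ℕ) • x := by
        rw [succ_nsmul, two_nsmul]
      rw [this, ← Nat.cast_smul_eq_nsmul (ZMod p)]
      norm_num
    have h1 : ∀ x, s (π x) = π x := by
      intro x
      rw [hπx, map_smul, map_add, map_add, hs3]
      congr 1
      abel
    have h2 : ∀ x, s x = x → π x = x := by
      intro x hx
      rw [hπx, hx, hx, hthree, smul_smul, hc3, one_smul]
    have h3 : ∀ x, π (s x) = π x := by
      intro x
      rw [hπx, hs3, hπx]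
      congr 1
      abel
    have h4 : ∀ v x : V, s v = v → B v (π x) = B v x := by
      intro v x hv
      have hsx : ∀ y : V, B v (s y) = B v y := by
        intro y
        conv_lhs => rw [← hv]
        exact hinv v y
      rw [hπx, map_smul, map_add, map_add, hsx, hsx, hsx, smul_eq_mul,
        show B v x + B v x + B v x = 3 * B v x by ring, ← mul_assoc, hc3, one_mul]
    have h5 : ∀ X : Submodule (ZMod p) V, (∀ x ∈ X, s x ∈ X) → ∀ x ∈ X, π x ∈ X := by
      intro X hX x hx
      rw [hπx]
      exact X.smul_mem c (X.add_mem (X.add_mem hx (hX x hx)) (hX _ (hX x hx)))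
    exact aux8 p V B s π h1 h2 h3 h4 h5
end

section
/- Let Γ = ⟨s⟩ be cyclic of order 2 or 3 acting by isometries on a symplectic space V over 𝔽_p with p ≠ 2,3. Then kernel of the restriction of the symplectic form to V^Γ equals (ker of the form)^Γ; in particular if the form on V is nondegenerate, its restriction to V^Γ is nondegenerate. -/
/-! If `s ^ n = 1` and `n` is not a zero divisor, then for every `y` the orbit sum `∑_{i<n} sⁱ y` is
fixed by `s`, while an `s`-fixed vector `v` pairs with it to `n • B v y` because `s` is an
isometry. So a fixed vector orthogonal to all fixed vectors is orthogonal to everything. -/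

open Finset

section OrbitSum

variable {R M : Type*} [CommRing R] [AddCommGroup M] [Module R M]

lemma LinearEquiv.apply_sum_range_pow_apply {n : ℕ} {s : M ≃ₗ[R] M} (hs : s ^ n = 1) (y : M) :
    s (∑ i ∈ range n, (s ^ i) y) = ∑ i ∈ range n, (s ^ i) y := by
  have hcycle : (s ^ n) y = (s ^ 0) y := by rw [hs, pow_zero]
  simp only [map_sum, ← LinearEquiv.mul_apply, ← pow_succ']
  rcases n with _ | n
  · simp
  · rw [sum_range_succ, hcycle, sum_range_succ']

lemma LinearMap.IsOrthogonal.apply_pow_apply_of_apply_eq {B : LinearMap.BilinForm R M}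
    {s : M ≃ₗ[R] M} (hB : B.IsOrthogonal s) {v : M} (hv : s v = v) (y : M) (i : ℕ) :
    B v ((s ^ i) y) = B v y := by
  induction i with
  | zero => rfl
  | succ i ih =>
    rw [pow_succ', LinearEquiv.mul_apply]
    conv_lhs => rw [← hv]
    rw [hB, ih]

theorem LinearMap.IsOrthogonal.apply_eq_zero_of_forall_fixed {B : LinearMap.BilinForm R M}
    {s : M ≃ₗ[R] M} (hB : B.IsOrthogonal s) {n : ℕ} (hs : s ^ n = 1)
    (hn : IsLeftRegular (n : R)) {v : M} (hv : s v = v)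
    (hvfix : ∀ y, s y = y → B v y = 0) (y : M) : B v y = 0 := by
  have horbit := hvfix _ (LinearEquiv.apply_sum_range_pow_apply hs y)
  simp only [map_sum, hB.apply_pow_apply_of_apply_eq hv, sum_const, card_range,
    nsmul_eq_mul] at horbit
  exact hn (horbit.trans (mul_zero _).symm)

end OrbitSum

lemma ZMod.isLeftRegular_natCast_prime {p q : ℕ} [Fact p.Prime] (hq : q.Prime) (hpq : p ≠ q) :
    IsLeftRegular (q : ZMod p) := by
  refine (IsRegular.of_ne_zero ?_).left
  rw [Ne, ZMod.natCast_eq_zero_iff, Nat.prime_dvd_prime_iff_eq Fact.out hq]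
  exact hpq

theorem stmt9_general (p : ℕ) [Fact p.Prime] (hp2 : p ≠ 2) (hp3 : p ≠ 3)
    (V : Type*) [AddCommGroup V] [Module (ZMod p) V]
    (B : LinearMap.BilinForm (ZMod p) V)
    (s : V ≃ₗ[ZMod p] V)
    (horder : s ^ 2 = 1 ∨ s ^ 3 = 1)
    (hinv : ∀ x y : V, B (s x) (s y) = B x y) :
    ({v : V | s v = v ∧ ∀ y : V, s y = y → B v y = 0}
        = {v : V | s v = v ∧ ∀ y : V, B v y = 0}) ∧
    (B.Nondegenerate →
      ∀ v : V, s v = v → (∀ y : V, s y = y → B v y = 0) → v = 0) := by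
  have hB : B.IsOrthogonal s := hinv
  obtain ⟨n, hsn, hn⟩ : ∃ n : ℕ, s ^ n = 1 ∧ IsLeftRegular (n : ZMod p) := by
    rcases horder with h2 | h3
    · exact ⟨2, h2, ZMod.isLeftRegular_natCast_prime Nat.prime_two hp2⟩
    · exact ⟨3, h3, ZMod.isLeftRegular_natCast_prime Nat.prime_three hp3⟩
  have hker : ∀ v, s v = v → (∀ y, s y = y → B v y = 0) → ∀ y, B v y = 0 :=
    fun _ ↦ hB.apply_eq_zero_of_forall_fixed hsn hn
  refine ⟨?_, fun hnd v hv hvfix ↦ hnd.1 v (hker v hv hvfix)⟩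
  ext v
  exact ⟨fun ⟨hv, hvfix⟩ ↦ ⟨hv, hker v hv hvfix⟩, fun ⟨hv, hvker⟩ ↦ ⟨hv, fun y _ ↦ hvker y⟩⟩

/-- for `Γ = ⟨s⟩` of order 2 or 3 acting by isometries on a symplectic
(alternating) space `V` over `𝔽_p`, `p ≠ 2, 3`, the kernel of the restriction of the
form to `V^Γ` equals `(ker of the form)^Γ`; in particular if the form is nondegenerate,
so is its restriction to `V^Γ`. -/
theorem stmt9 (p : ℕ) [Fact p.Prime] (hp2 : p ≠ 2) (hp3 : p ≠ 3)
    (V : Type*) [AddCommGroup V] [Module (ZMod p) V] [FiniteDimensional (ZMod p) V]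
    (B : LinearMap.BilinForm (ZMod p) V)
    (halt : ∀ x : V, B x x = 0)
    (s : V ≃ₗ[ZMod p] V)
    (horder : s ^ 2 = 1 ∨ s ^ 3 = 1)
    (hinv : ∀ x y : V, B (s x) (s y) = B x y) :
    ({v : V | s v = v ∧ ∀ y : V, s y = y → B v y = 0}
        = {v : V | s v = v ∧ ∀ y : V, B v y = 0}) ∧
    (B.Nondegenerate →
      ∀ v : V, s v = v → (∀ y : V, s y = y → B v y = 0) → v = 0) :=
  stmt9_general p hp2 hp3 V B s horder hinv
end

section
/- Let V be a quadratic space over a non-archimedean local field F (residue characteristic ≠ 2) decomposed as an orthogonal sum V = V₁ ⊥ V₂. A self-dual norm α on V is split by this decomposition (i.e., α = α|_{V₁} ∧ α|_{V₂}) if and only if the restrictions α|_{V₁} and α|_{V₂} are self-dual norms on V₁ and V₂ respectively. -/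
open scoped Classical

noncomputable section

/-- A (normalized surjective) discrete valuation on `F`, as an additive `ℤ`-valued
valuation on nonzero elements. -/
def IsVal (F : Type*) [Field F] (val : F → ℤ) : Prop :=
  (∀ a b : F, a ≠ 0 → b ≠ 0 → val (a * b) = val a + val b) ∧
  (∀ a b : F, a ≠ 0 → b ≠ 0 → a + b ≠ 0 → min (val a) (val b) ≤ val (a + b)) ∧
  (∀ n : ℤ, ∃ a : F, a ≠ 0 ∧ val a = n)

variable {F : Type*} [Field F] {V : Type*} [AddCommGroup V] [Module F V]

/-- A norm on `V` (valued in `ℝ ∪ {∞}`, with `α(x) = ∞ ↔ x = 0`). -/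
def IsNorm (val : F → ℤ) (α : V → WithTop ℝ) : Prop :=
  (∀ x : V, α x = ⊤ ↔ x = 0) ∧
  (∀ x y : V, min (α x) (α y) ≤ α (x + y)) ∧
  (∀ (a : F) (x : V), a ≠ 0 → α (a • x) = ((val a : ℝ) : WithTop ℝ) + α x)

/-- A norm on a subspace `W` of `V`. -/
def IsNormOn (val : F → ℤ) (W : Submodule F V) (α : V → WithTop ℝ) : Prop :=
  (∀ x ∈ W, (α x = ⊤ ↔ x = 0)) ∧
  (∀ x ∈ W, ∀ y ∈ W, min (α x) (α y) ≤ α (x + y)) ∧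
  (∀ (a : F), ∀ x ∈ W, a ≠ 0 → α (a • x) = ((val a : ℝ) : WithTop ℝ) + α x)

/-- The dual norm `α*(v) = inf_x (v_F(f(v,x)) - α(x))`, the infimum being taken over
the `x` giving finite terms. -/
def dualNorm (val : F → ℤ) (f : V → V → F) (α : V → WithTop ℝ) (v : V) : WithTop ℝ :=
  if (∃ x : V, f v x ≠ 0) then
    ((sInf {r : ℝ | ∃ x : V, ∃ s : ℝ, f v x ≠ 0 ∧ α x = (s : WithTop ℝ) ∧
        r = (val (f v x) : ℝ) - s} : ℝ) : WithTop ℝ)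
  else ⊤

/-- Self-duality of a norm with respect to `f`. -/
def IsSelfDual (val : F → ℤ) (f : V → V → F) (α : V → WithTop ℝ) : Prop :=
  ∀ v : V, dualNorm val f α v = α v

/-- The dual (sharp) norm with the infimum restricted to pairing against a subspace `W`:
`α^♯(v) = inf_{x ∈ W} (v_F(f(v,x)) - α(x))`. -/
def dualNormOn (val : F → ℤ) (f : V → V → F) (W : Submodule F V)
    (α : V → WithTop ℝ) (v : V) : WithTop ℝ :=
  if (∃ x ∈ W, f v x ≠ 0) then
    ((sInf {r : ℝ | ∃ x ∈ W, ∃ s : ℝ, f v x ≠ 0 ∧ α x = (s : WithTop ℝ) ∧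
        r = (val (f v x) : ℝ) - s} : ℝ) : WithTop ℝ)
  else ⊤

end

/-! Since the infimum defining a dual norm is taken in `ℝ`, an unbounded infimum takes the junk
value `0`. Self-duality rules this out: it would force `α v = 0` and `α (a • v) = 0` for
`val a = 1`, contradicting `α (a • v) = 1 + α v`. Once the infima are genuine, a split norm
has `α(x) ≤ α(π x)`, so pairing against `W` alone loses nothing; conversely
`α(v) = α*(v) ≤ α^♯(π v) = α(π v)` for each projection, while `min (α (π₁ v)) (α (π₂ v)) ≤ α v`
is the ultrametric inequality. -/

section DualNorm

variable {F : Type*} [Field F] {V : Type*} [AddCommGroup V] [Module F V]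
  {val : F → ℤ} {f : LinearMap.BilinForm F V} {α : V → WithTop ℝ}

def dualSet (val : F → ℤ) (f : LinearMap.BilinForm F V) (W : Submodule F V)
    (α : V → WithTop ℝ) (v : V) : Set ℝ :=
  {r : ℝ | ∃ x ∈ W, ∃ s : ℝ, f v x ≠ 0 ∧ α x = (s : WithTop ℝ) ∧ r = (val (f v x) : ℝ) - s}

lemma dualNormOn_eq_ite (W : Submodule F V) (v : V) :
    dualNormOn val (fun x y => f x y) W α v =
      if ∃ x ∈ W, f v x ≠ 0 then ((sInf (dualSet val f W α v) : ℝ) : WithTop ℝ)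
      else ⊤ :=
  rfl

lemma dualNorm_eq_dualNormOn_top (v : V) :
    dualNorm val (fun x y => f x y) α v = dualNormOn val (fun x y => f x y) ⊤ α v := by
  simp only [dualNorm, dualNormOn, Submodule.mem_top, true_and]

lemma dualSet_mono {W W' : Submodule F V} (h : W ≤ W') (v : V) :
    dualSet val f W α v ⊆ dualSet val f W' α v := by
  rintro _ ⟨x, hx, s, hfx, hs, rfl⟩
  exact ⟨x, h hx, s, hfx, hs, rfl⟩

lemma IsNorm.exists_eq_coe_of_apply_ne_zero (hα : IsNorm val α) {v x : V} (h : f v x ≠ 0) :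
    ∃ s : ℝ, α x = s := by
  have hx : x ≠ 0 := by
    rintro rfl
    simp at h
  obtain ⟨s, hs⟩ := WithTop.ne_top_iff_exists.mp (mt (hα.1 x).mp hx)
  exact ⟨s, hs.symm⟩

lemma dualNormOn_le_dualNormOn (hα : IsNorm val α) {W W' : Submodule F V} {v v' : V}
    (hbdd : BddBelow (dualSet val f W α v))
    (h : ∀ x' ∈ W', f v' x' ≠ 0 → ∃ x ∈ W, f v x = f v' x' ∧ α x' ≤ α x) :
    dualNormOn val (fun x y => f x y) W α v ≤ dualNormOn val (fun x y => f x y) W' α v' := by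
  by_cases hW' : ∃ x' ∈ W', f v' x' ≠ 0
  swap
  · rw [dualNormOn_eq_ite W', if_neg hW']
    exact le_top
  obtain ⟨x₀', hx₀'W, hfx₀'⟩ := hW'
  obtain ⟨x₀, hx₀W, hfx₀, -⟩ := h x₀' hx₀'W hfx₀'
  rw [dualNormOn_eq_ite W', if_pos ⟨x₀', hx₀'W, hfx₀'⟩,
    dualNormOn_eq_ite W, if_pos ⟨x₀, hx₀W, hfx₀ ▸ hfx₀'⟩, WithTop.coe_le_coe]
  obtain ⟨s₀, hs₀⟩ := hα.exists_eq_coe_of_apply_ne_zero hfx₀'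
  refine le_csInf ⟨_, x₀', hx₀'W, s₀, hfx₀', hs₀, rfl⟩ ?_
  rintro _ ⟨x', hx'W, s', hfx', hs', rfl⟩
  obtain ⟨x, hxW, hfx, hle⟩ := h x' hx'W hfx'
  obtain ⟨s, hs⟩ := hα.exists_eq_coe_of_apply_ne_zero (hfx ▸ hfx')
  rw [hs', hs, WithTop.coe_le_coe] at hle
  calc sInf (dualSet val f W α v) ≤ (val (f v x) : ℝ) - s :=
        csInf_le hbdd ⟨x, hxW, s, hfx ▸ hfx', hs, rfl⟩
    _ ≤ (val (f v' x') : ℝ) - s' := by rw [hfx]; linarith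

lemma bddBelow_dualSet_of_smul (hval : IsVal F val) {a : F} (ha : a ≠ 0) {W : Submodule F V}
    {v : V} (h : BddBelow (dualSet val f W α (a • v))) :
    BddBelow (dualSet val f W α v) := by
  obtain ⟨b, hb⟩ := h
  refine ⟨b - val a, ?_⟩
  rintro _ ⟨x, hxW, s, hfx, hs, rfl⟩
  have hfax : f (a • v) x = a * f v x := by simp
  have hmem := hb ⟨x, hxW, s, hfax ▸ mul_ne_zero ha hfx, hs, rfl⟩
  rw [hfax, hval.1 a _ ha hfx] at hmem
  push_cast at hmem
  linarith

lemma IsSelfDual.eq_zero_of_not_bddBelow (hsd : IsSelfDual val (fun x y => f x y) α) {v : V}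
    (hb : ¬ BddBelow (dualSet val f ⊤ α v)) : α v = 0 := by
  obtain ⟨_, x, hx, -, hfx, -⟩ : (dualSet val f ⊤ α v).Nonempty :=
    Set.nonempty_iff_ne_empty.mpr fun h => hb (h ▸ bddBelow_empty)
  rw [← hsd v, dualNorm_eq_dualNormOn_top, dualNormOn_eq_ite, if_pos ⟨x, hx, hfx⟩,
    Real.sInf_of_not_bddBelow hb, WithTop.coe_zero]

lemma IsSelfDual.bddBelow_dualSet (hval : IsVal F val) (hα : IsNorm val α)
    (hsd : IsSelfDual val (fun x y => f x y) α) (W : Submodule F V) (v : V) :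
    BddBelow (dualSet val f W α v) := by
  refine BddBelow.mono (dualSet_mono le_top v) ?_
  by_contra hb
  obtain ⟨a, ha, hva⟩ := hval.2.2 1
  have hsmul := hα.2.2 a v ha
  rw [hsd.eq_zero_of_not_bddBelow hb,
    hsd.eq_zero_of_not_bddBelow (mt (bddBelow_dualSet_of_smul hval ha) hb), hva] at hsmul
  norm_num at hsmul

lemma IsSelfDual.dualNormOn_eq_self (hval : IsVal F val) (hα : IsNorm val α)
    (hsd : IsSelfDual val (fun x y => f x y) α) {W : Submodule F V} {π : V → V}
    (hπ : ∀ x, π x ∈ W) {v : V} (hfπ : ∀ x, f v (π x) = f v x) (hle : ∀ x, α x ≤ α (π x)) :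
    dualNormOn val (fun x y => f x y) W α v = α v := by
  refine Eq.trans ?_ ((dualNorm_eq_dualNormOn_top v).symm.trans (hsd v))
  exact le_antisymm
    (dualNormOn_le_dualNormOn hα (hsd.bddBelow_dualSet hval hα W v)
      fun x _ _ => ⟨π x, hπ x, hfπ x, hle x⟩)
    (dualNormOn_le_dualNormOn hα (hsd.bddBelow_dualSet hval hα ⊤ v)
      fun x _ _ => ⟨x, trivial, rfl, le_rfl⟩)

lemma IsSelfDual.le_of_dualNormOn_eq_self (hval : IsVal F val) (hα : IsNorm val α)
    (hsd : IsSelfDual val (fun x y => f x y) α) {W : Submodule F V} {v w : V}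
    (hfw : ∀ x ∈ W, f w x = f v x) (hw : dualNormOn val (fun x y => f x y) W α w = α w) :
    α v ≤ α w :=
  calc α v = dualNormOn val (fun x y => f x y) ⊤ α v :=
        (hsd v).symm.trans (dualNorm_eq_dualNormOn_top v)
    _ ≤ dualNormOn val (fun x y => f x y) W α w :=
        dualNormOn_le_dualNormOn hα (hsd.bddBelow_dualSet hval hα ⊤ v)
          fun x hx _ => ⟨x, trivial, (hfw x hx).symm, le_rfl⟩
    _ = α w := hw

end DualNorm

section Projection

variable {F : Type*} [Field F] {V : Type*} [AddCommGroup V] [Module F V]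
  {f : LinearMap.BilinForm F V} {W W' : Submodule F V} {π π' : V →ₗ[F] V}

lemma apply_proj_of_orthogonal (hπ : ∀ x, π x + π' x = x) (hπ' : ∀ x, π' x ∈ W')
    (horth : ∀ v ∈ W, ∀ y ∈ W', f v y = 0) {v : V} (hv : v ∈ W) (x : V) :
    f v (π x) = f v x := by
  conv_rhs => rw [← hπ x]
  rw [map_add, horth v hv _ (hπ' x), add_zero]

lemma proj_apply_of_orthogonal (hπ : ∀ x, π x + π' x = x) (hπ' : ∀ x, π' x ∈ W')
    (horth : ∀ y ∈ W', ∀ x ∈ W, f y x = 0) (v x : V) (hx : x ∈ W) :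
    f (π v) x = f v x := by
  conv_rhs => rw [← hπ v]
  rw [map_add, LinearMap.add_apply, horth _ (hπ' v) x hx, add_zero]

end Projection

theorem stmt11_general {F : Type*} [Field F] {V : Type*} [AddCommGroup V] [Module F V]
    (val : F → ℤ) (hval : IsVal F val)
    (f : LinearMap.BilinForm F V) (hsymm : ∀ x y : V, f x y = f y x)
    (V1 V2 : Submodule F V)
    (horth : ∀ x ∈ V1, ∀ y ∈ V2, f x y = 0)
    (π1 π2 : V →ₗ[F] V)
    (hπ1 : ∀ v : V, π1 v ∈ V1) (hπ2 : ∀ v : V, π2 v ∈ V2)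
    (hπ : ∀ v : V, π1 v + π2 v = v)
    (α : V → WithTop ℝ) (hα : IsNorm val α)
    (hsd : IsSelfDual val (fun x y => f x y) α) :
    (∀ v : V, α v = min (α (π1 v)) (α (π2 v)))
      ↔ ((∀ v ∈ V1, dualNormOn val (fun x y => f x y) V1 α v = α v) ∧
         (∀ v ∈ V2, dualNormOn val (fun x y => f x y) V2 α v = α v)) := by
  have hπ' : ∀ v, π2 v + π1 v = v := fun v => (add_comm _ _).trans (hπ v)
  have horth' : ∀ y ∈ V2, ∀ x ∈ V1, f y x = 0 := fun y hy x hx =>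
    (hsymm y x).trans (horth x hx y hy)
  constructor
  · intro hsplit
    exact ⟨fun v hv => hsd.dualNormOn_eq_self hval hα hπ1 (apply_proj_of_orthogonal hπ hπ2 horth hv)
        fun x => (hsplit x).trans_le (min_le_left _ _),
      fun v hv => hsd.dualNormOn_eq_self hval hα hπ2 (apply_proj_of_orthogonal hπ' hπ1 horth' hv)
        fun x => (hsplit x).trans_le (min_le_right _ _)⟩
  · rintro ⟨h1, h2⟩ v
    refine le_antisymm (le_min ?_ ?_) ?_
    · exact hsd.le_of_dualNormOn_eq_self hval hα (proj_apply_of_orthogonal hπ hπ2 horth' v)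
        (h1 _ (hπ1 v))
    · exact hsd.le_of_dualNormOn_eq_self hval hα (proj_apply_of_orthogonal hπ' hπ1 horth v)
        (h2 _ (hπ2 v))
    · simpa only [hπ v] using hα.2.1 (π1 v) (π2 v)

/-- for a quadratic space `V = V₁ ⊥ V₂` over a non-archimedean local
field of residue characteristic `≠ 2`, a self-dual norm `α` is split by the
decomposition if and only if its restrictions to `V₁` and `V₂` are self-dual. -/
theorem stmt11 {F : Type*} [Field F] {V : Type*} [AddCommGroup V] [Module F V]
    (val : F → ℤ) (hval : IsVal F val)
    (h2 : (2 : F) ≠ 0) (hval2 : val 2 = 0)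
    (f : LinearMap.BilinForm F V) (hsymm : ∀ x y : V, f x y = f y x)
    (hnd : f.Nondegenerate)
    (V1 V2 : Submodule F V) (hcompl : IsCompl V1 V2)
    (horth : ∀ x ∈ V1, ∀ y ∈ V2, f x y = 0)
    (π1 π2 : V →ₗ[F] V)
    (hπ1 : ∀ v : V, π1 v ∈ V1) (hπ2 : ∀ v : V, π2 v ∈ V2)
    (hπ : ∀ v : V, π1 v + π2 v = v)
    (α : V → WithTop ℝ) (hα : IsNorm val α)
    (hsd : IsSelfDual val (fun x y => f x y) α) :
    (∀ v : V, α v = min (α (π1 v)) (α (π2 v)))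
      ↔ ((∀ v ∈ V1, dualNormOn val (fun x y => f x y) V1 α v = α v) ∧
         (∀ v ∈ V2, dualNormOn val (fun x y => f x y) V2 α v = α v)) :=
  stmt11_general val hval f hsymm V1 V2 horth π1 π2 hπ1 hπ2 hπ α hα hsd
end

section
/- Let α be a self-dual algebra norm on the octonion algebra V, split by V = V⁰ ⊥ W where V⁰ is a 2-dimensional split composition subalgebra with orthogonal idempotents e⁺, e⁻. Then α(ξe⁺ + μe⁻) = min(v_F(ξ), v_F(μ)) for all ξ, μ ∈ F; in particular α(e⁺) = α(e⁻) = 0. -/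
open QuadraticMap

open scoped Classical

/-- a self-dual algebra norm `α` on the octonion algebra split by
`V = V⁰ ⊥ W` with `V⁰ = Fe⁺ ⊕ Fe⁻` split of dimension 2 satisfies
`α(ξe⁺ + μe⁻) = min(v_F(ξ), v_F(μ))`; in particular `α(e⁺) = α(e⁻) = 0`. -/
theorem stmt13 {F : Type*} [Field F] {V : Type*} [AddCommGroup V] [Module F V]
    (A : CompAlg F V)
    (val : F → ℤ) (hval : IsVal F val)
    (h2 : (2 : F) ≠ 0) (hval2 : val 2 = 0)
    (α : V → WithTop ℝ) (hα : IsNorm val α)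
    (halg : ∀ x y : V, α x + α y ≤ α (A.mul x y))
    (hsd : IsSelfDual val A.f α)
    (ep em : V)
    (hep : A.mul ep ep = ep) (hem : A.mul em em = em)
    (hepem : A.mul ep em = 0) (hemep : A.mul em ep = 0)
    (hsum : ep + em = A.one) (hpol : A.f ep em = 1)
    (V0 W : Submodule F V) (hV0 : V0 = Submodule.span F {ep, em})
    (hcompl : IsCompl V0 W)
    (horth : ∀ x ∈ V0, ∀ y ∈ W, A.f x y = 0)
    (π0 πW : V →ₗ[F] V)
    (hπ0 : ∀ v : V, π0 v ∈ V0) (hπW : ∀ v : V, πW v ∈ W)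
    (hπ : ∀ v : V, π0 v + πW v = v)
    (hsplit : ∀ v : V, α v = min (α (π0 v)) (α (πW v))) :
    (∀ ξ μ : F, α (ξ • ep + μ • em)
        = min (if ξ = 0 then (⊤ : WithTop ℝ) else ((val ξ : ℝ) : WithTop ℝ))
              (if μ = 0 then (⊤ : WithTop ℝ) else ((val μ : ℝ) : WithTop ℝ))) ∧
    α ep = 0 ∧ α em = 0 := by
  
  classical
  obtain ⟨htop, hadd, hsm⟩ := hα
  -- basic Q facts
  have hQ0 : A.Q 0 = 0 := A.Q.map_zero
  have hQp : A.Q ep * A.Q ep = A.Q ep := by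
    have h := A.norm_mul ep ep; rw [hep] at h; exact h.symm
  have hQm : A.Q em * A.Q em = A.Q em := by
    have h := A.norm_mul em em; rw [hem] at h; exact h.symm
  have hQpm : A.Q ep * A.Q em = 0 := by
    have h := A.norm_mul ep em; rw [hepem, hQ0] at h; exact h.symm
  have hQ1 : A.Q A.one * A.Q A.one = A.Q A.one := by
    have h := A.norm_mul A.one A.one; rw [A.one_mul] at h; exact h.symm
  have hrel : A.Q A.one - A.Q ep - A.Q em = 1 := by
    have : A.f ep em = A.Q (ep + em) - A.Q ep - A.Q em := rfl
    rw [hsum] at this; rw [← this, hpol]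
  -- Q ep = 0 and Q em = 0
  have hQpz : A.Q ep = 0 ∧ A.Q em = 0 := by
    rcases mul_eq_zero.mp (show A.Q ep * (A.Q ep - 1) = 0 by ring_nf; linear_combination hQp) with
      hp | hp
    · -- Q ep = 0
      refine ⟨hp, ?_⟩
      rcases mul_eq_zero.mp (show A.Q em * (A.Q em - 1) = 0 by
          ring_nf; linear_combination hQm) with hm | hm
      · exact hm
      · exfalso
        have hm1 : A.Q em = 1 := by linear_combination hm
        have ho : A.Q A.one = 2 := by linear_combination hrel + hm1 + hp
        rw [ho] at hQ1
        exact h2 (by linear_combination hQ1)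
    · exfalso
      have hp1 : A.Q ep = 1 := by linear_combination hp
      have hm0 : A.Q em = 0 := by
        have := hQpm; rw [hp1, one_mul] at this; exact this
      have ho : A.Q A.one = 2 := by linear_combination hrel + hp1 + hm0
      rw [ho] at hQ1
      exact h2 (by linear_combination hQ1)
  obtain ⟨hQep, hQem⟩ := hQpz
  -- f values on the pair
  have hfpp : A.f ep ep = 0 := by
    show A.Q (ep + ep) - A.Q ep - A.Q ep = 0
    rw [← two_smul F ep, QuadraticMap.map_smul, hQep]; ring_nf
  have hfmm : A.f em em = 0 := by
    show A.Q (em + em) - A.Q em - A.Q em = 0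
    rw [← two_smul F em, QuadraticMap.map_smul, hQem]; ring_nf
  have hfmp : A.f em ep = 1 := by
    have : A.f em ep = A.f ep em := by
      show A.Q (em + ep) - A.Q em - A.Q ep = A.Q (ep + em) - A.Q ep - A.Q em
      rw [add_comm em ep]; ring
    rw [this, hpol]
  have fpol : ∀ x y : V, A.f x y = QuadraticMap.polar (⇑A.Q) x y := fun _ _ => rfl
  -- f against linear combinations
  have hf_ep : ∀ ξ μ : F, A.f ep (ξ • ep + μ • em) = μ := by
    intro ξ μ
    rw [fpol, QuadraticMap.polar_add_right, QuadraticMap.polar_smul_right,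
      QuadraticMap.polar_smul_right, ← fpol, ← fpol, hfpp, hpol]
    simp [smul_eq_mul]
  have hf_em : ∀ ξ μ : F, A.f em (ξ • ep + μ • em) = ξ := by
    intro ξ μ
    rw [fpol, QuadraticMap.polar_add_right, QuadraticMap.polar_smul_right,
      QuadraticMap.polar_smul_right, ← fpol, ← fpol, hfmm, hfmp]
    simp [smul_eq_mul]
  -- nonvanishing
  have hepne : ep ≠ 0 := by
    intro h
    rw [h] at hpol
    have : A.f 0 em = 0 := by
      show A.Q (0 + em) - A.Q 0 - A.Q em = 0
      rw [zero_add, hQ0]; ring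
    rw [hpol] at this; exact one_ne_zero this
  have hemne : em ≠ 0 := by
    intro h
    rw [h] at hfmp
    have : A.f 0 ep = 0 := by
      show A.Q (0 + ep) - A.Q 0 - A.Q ep = 0
      rw [zero_add, hQ0]; ring
    rw [hfmp] at this; exact one_ne_zero this
  obtain ⟨a, ha⟩ := WithTop.ne_top_iff_exists.mp (fun h => hepne ((htop ep).mp h))
  obtain ⟨b, hb⟩ := WithTop.ne_top_iff_exists.mp (fun h => hemne ((htop em).mp h))
  -- a ≤ 0, b ≤ 0
  have hale : a ≤ 0 := by
    have h := halg ep ep; rw [hep, ← ha] at h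
    have : a + a ≤ a := by exact_mod_cast h
    linarith
  have hble : b ≤ 0 := by
    have h := halg em em; rw [hem, ← hb] at h
    have : b + b ≤ b := by exact_mod_cast h
    linarith
  -- upper bounds via multiplication
  have hub_m : ∀ ξ μ : F, μ ≠ 0 → α (ξ • ep + μ • em) ≤ ((val μ : ℝ) : WithTop ℝ) := by
    intro ξ μ hμ
    have hx : A.mul (ξ • ep + μ • em) em = μ • em := by
      rw [A.mul_add_left, A.mul_smul_left, A.mul_smul_left, hepem, hem, smul_zero, zero_add]
    have h1 := halg (ξ • ep + μ • em) em
    rw [hx, hsm μ em hμ, ← hb] at h1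
    exact (WithTop.add_le_add_iff_right (WithTop.coe_ne_top (a := b))).mp h1
  have hub_p : ∀ ξ μ : F, ξ ≠ 0 → α (ξ • ep + μ • em) ≤ ((val ξ : ℝ) : WithTop ℝ) := by
    intro ξ μ hξ
    have hx : A.mul (ξ • ep + μ • em) ep = ξ • ep := by
      rw [A.mul_add_left, A.mul_smul_left, A.mul_smul_left, hemep, hep, smul_zero, add_zero]
    have h1 := halg (ξ • ep + μ • em) ep
    rw [hx, hsm ξ ep hξ, ← ha] at h1
    exact (WithTop.add_le_add_iff_right (WithTop.coe_ne_top (a := a))).mp h1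
  have hepV0 : ep ∈ V0 := by
    rw [hV0]; exact Submodule.subset_span (Set.mem_insert _ _)
  have hemV0 : em ∈ V0 := by
    rw [hV0]; exact Submodule.subset_span (Set.mem_insert_of_mem _ rfl)
  -- decomposition of f e x through the projection
  have hdecomp : ∀ (e : V), e ∈ V0 → ∀ x : V, A.f e x = A.f e (π0 x) := by
    intro e he x
    conv_lhs => rw [← hπ x]
    rw [fpol, QuadraticMap.polar_add_right, ← fpol, ← fpol, horth e he (πW x) (hπW x), add_zero]
  -- a ≥ 0
  have hage : 0 ≤ a := by
    have hd := hsd ep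
    rw [dualNorm, if_pos ⟨em, by rw [hpol]; exact one_ne_zero⟩, ← ha] at hd
    have hsinf : sInf {r : ℝ | ∃ x : V, ∃ s : ℝ, A.f ep x ≠ 0 ∧ α x = (s : WithTop ℝ) ∧
        r = (val (A.f ep x) : ℝ) - s} = a := WithTop.coe_eq_coe.mp hd
    have hbound : ∀ r ∈ {r : ℝ | ∃ x : V, ∃ s : ℝ, A.f ep x ≠ 0 ∧ α x = (s : WithTop ℝ) ∧
        r = (val (A.f ep x) : ℝ) - s}, (0 : ℝ) ≤ r := by
      rintro r ⟨x, s, hfx, hαx, rfl⟩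
      obtain ⟨ξ, μ, hξμ⟩ := Submodule.mem_span_pair.mp (hV0 ▸ hπ0 x)
      have hfval : A.f ep x = μ := by rw [hdecomp ep hepV0 x, ← hξμ, hf_ep]
      have hμ : μ ≠ 0 := by rw [← hfval]; exact hfx
      have hle : α x ≤ ((val μ : ℝ) : WithTop ℝ) := by
        calc α x ≤ α (π0 x) := by rw [hsplit x]; exact min_le_left _ _
        _ = α (ξ • ep + μ • em) := by rw [hξμ]
        _ ≤ _ := hub_m ξ μ hμ
      rw [hαx] at hle
      have : s ≤ (val μ : ℝ) := by exact_mod_cast hle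
      rw [hfval]
      linarith
    have hne : {r : ℝ | ∃ x : V, ∃ s : ℝ, A.f ep x ≠ 0 ∧ α x = (s : WithTop ℝ) ∧
        r = (val (A.f ep x) : ℝ) - s}.Nonempty :=
      ⟨(val (A.f ep em) : ℝ) - b, em, b, by rw [hpol]; exact one_ne_zero, hb.symm, rfl⟩
    rw [← hsinf]
    exact le_csInf hne hbound
  have hbge : 0 ≤ b := by
    have hd := hsd em
    rw [dualNorm, if_pos ⟨ep, by rw [hfmp]; exact one_ne_zero⟩, ← hb] at hd
    have hsinf : sInf {r : ℝ | ∃ x : V, ∃ s : ℝ, A.f em x ≠ 0 ∧ α x = (s : WithTop ℝ) ∧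
        r = (val (A.f em x) : ℝ) - s} = b := WithTop.coe_eq_coe.mp hd
    have hbound : ∀ r ∈ {r : ℝ | ∃ x : V, ∃ s : ℝ, A.f em x ≠ 0 ∧ α x = (s : WithTop ℝ) ∧
        r = (val (A.f em x) : ℝ) - s}, (0 : ℝ) ≤ r := by
      rintro r ⟨x, s, hfx, hαx, rfl⟩
      obtain ⟨ξ, μ, hξμ⟩ := Submodule.mem_span_pair.mp (hV0 ▸ hπ0 x)
      have hfval : A.f em x = ξ := by rw [hdecomp em hemV0 x, ← hξμ, hf_em]
      have hξ : ξ ≠ 0 := by rw [← hfval]; exact hfx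
      have hle : α x ≤ ((val ξ : ℝ) : WithTop ℝ) := by
        calc α x ≤ α (π0 x) := by rw [hsplit x]; exact min_le_left _ _
        _ = α (ξ • ep + μ • em) := by rw [hξμ]
        _ ≤ _ := hub_p ξ μ hξ
      rw [hαx] at hle
      have : s ≤ (val ξ : ℝ) := by exact_mod_cast hle
      rw [hfval]
      linarith
    have hne : {r : ℝ | ∃ x : V, ∃ s : ℝ, A.f em x ≠ 0 ∧ α x = (s : WithTop ℝ) ∧
        r = (val (A.f em x) : ℝ) - s}.Nonempty :=
      ⟨(val (A.f em ep) : ℝ) - a, ep, a, by rw [hfmp]; exact one_ne_zero, ha.symm, rfl⟩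
    rw [← hsinf]
    exact le_csInf hne hbound
  have ha0 : α ep = 0 := by rw [← ha, le_antisymm hale hage]; norm_cast
  have hb0 : α em = 0 := by rw [← hb, le_antisymm hble hbge]; norm_cast
  refine ⟨?_, ha0, hb0⟩
  intro ξ μ
  by_cases hξ : ξ = 0 <;> by_cases hμ : μ = 0
  · rw [if_pos hξ, if_pos hμ, hξ, hμ]
    simp only [zero_smul, add_zero, min_self]
    exact (htop 0).mpr rfl
  · rw [if_pos hξ, if_neg hμ, hξ]
    simp only [zero_smul, zero_add]
    rw [hsm μ em hμ, hb0, add_zero]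
    simp
  · rw [if_neg hξ, if_pos hμ, hμ]
    simp only [zero_smul, add_zero]
    rw [hsm ξ ep hξ, ha0, add_zero]
    simp
  · rw [if_neg hξ, if_neg hμ]
    refine le_antisymm (le_min (hub_p ξ μ hξ) (hub_m ξ μ hμ)) ?_
    have h1 := hadd (ξ • ep) (μ • em)
    rw [hsm ξ ep hξ, hsm μ em hμ, ha0, hb0, add_zero, add_zero] at h1
    exact h1
end

section
/- Let α be a self-dual algebra norm on the octonion algebra V split by V = V⁰ ⊥ W, where V⁰ is a split 2-dimensional composition subalgebra with idempotents e⁺, e⁻, and W⁺ = e⁺W, W⁻ = e⁻W the associated complete polarization of W. Then the restriction of α to W is split by W = W⁺ ⊕ W⁻. -/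
open QuadraticMap

open scoped Classical

section AuxLemmas

variable {F : Type*} [Field F] {V : Type*} [AddCommGroup V] [Module F V]

lemma CompAlg.f_eq_polar (A : CompAlg F V) (x y : V) :
    A.f x y = QuadraticMap.polar (⇑A.Q) x y := rfl

/-- Key auxiliary lemma: an isotropic idempotent `e` with partner `e'`
(with `f e e' = 1`) has norm `α e = 0` for a self-dual algebra norm split by
`V = V⁰ ⊥ W`. -/
lemma aux_e_zero (A : CompAlg F V) (val : F → ℤ) (hval : IsVal F val)
    (α : V → WithTop ℝ) (hα : IsNorm val α)
    (halg : ∀ x y : V, α x + α y ≤ α (A.mul x y))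
    (hsd : IsSelfDual val A.f α)
    (e e' : V)
    (hee : A.mul e e = e) (he'e' : A.mul e' e' = e') (hee' : A.mul e e' = 0)
    (hfe : A.f e e = 0) (hfee' : A.f e e' = 1)
    (π0 πW : V →ₗ[F] V)
    (hπ : ∀ v : V, π0 v + πW v = v)
    (hspan : ∀ x : V, ∃ a b : F, a • e + b • e' = π0 x)
    (horthW : ∀ x : V, A.f e (πW x) = 0)
    (hsplit : ∀ v : V, α v = min (α (π0 v)) (α (πW v))) :
    α e = 0 := by
  -- e' is nonzero
  have he'0 : e' ≠ 0 := by
    intro h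
    rw [h] at hfee'
    simp [CompAlg.f] at hfee'
  obtain ⟨s', hs'⟩ : ∃ s' : ℝ, α e' = (s' : WithTop ℝ) := by
    rcases Option.ne_none_iff_exists.mp (fun h => he'0 ((hα.1 e').mp h)) with ⟨s', hs'⟩
    exact ⟨s', hs'.symm⟩
  -- every element of the defining set of the dual norm at `e` is nonnegative
  have key : ∀ x : V, ∀ s : ℝ, A.f e x ≠ 0 → α x = (s : WithTop ℝ) →
      s ≤ (val (A.f e x) : ℝ) := by
    intro x s hfx hαx
    obtain ⟨a, b, hab⟩ := hspan x
    have hfx0 : A.f e x = b := by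
      have h1 : A.f e (π0 x + πW x) = A.f e (π0 x) + A.f e (πW x) := by
        rw [CompAlg.f_eq_polar, CompAlg.f_eq_polar, CompAlg.f_eq_polar,
          QuadraticMap.polar_add_right]
      rw [hπ x, horthW, add_zero] at h1
      rw [h1, ← hab, CompAlg.f_eq_polar, QuadraticMap.polar_add_right,
        QuadraticMap.polar_smul_right, QuadraticMap.polar_smul_right,
        ← CompAlg.f_eq_polar, ← CompAlg.f_eq_polar, hfe, hfee']
      simp [smul_eq_mul]
    have hb : b ≠ 0 := by rw [hfx0] at hfx; exact hfx
    -- the multiplication bound: α(π0 x) ≤ val b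
    have hmulx0 : A.mul (π0 x) e' = b • e' := by
      rw [← hab, A.mul_add_left, A.mul_smul_left, A.mul_smul_left, hee', he'e',
        smul_zero, zero_add]
    have h2 : α (π0 x) + α e' ≤ α (A.mul (π0 x) e') := halg _ _
    rw [hmulx0, hα.2.2 b e' hb, hs'] at h2
    have h3 : α (π0 x) ≤ ((val b : ℝ) : WithTop ℝ) :=
      (WithTop.add_le_add_iff_right (WithTop.coe_ne_top : ((s' : ℝ) : WithTop ℝ) ≠ ⊤)).mp h2
    have h4 : α x ≤ α (π0 x) := by
      rw [hsplit x]; exact min_le_left _ _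
    rw [hαx] at h4
    have h5 : (s : WithTop ℝ) ≤ ((val b : ℝ) : WithTop ℝ) := le_trans h4 h3
    rw [hfx0]
    exact_mod_cast h5
  -- use self-duality
  have hex : ∃ x : V, A.f e x ≠ 0 := ⟨e', by rw [hfee']; exact one_ne_zero⟩
  have hsde := hsd e
  unfold dualNorm at hsde
  rw [if_pos hex] at hsde
  have hne : Set.Nonempty {r : ℝ | ∃ x : V, ∃ s : ℝ, A.f e x ≠ 0 ∧ α x = (s : WithTop ℝ) ∧
      r = (val (A.f e x) : ℝ) - s} :=
    ⟨(val (A.f e e') : ℝ) - s', e', s', by rw [hfee']; exact one_ne_zero, hs', rfl⟩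
  have hlb : ∀ r ∈ {r : ℝ | ∃ x : V, ∃ s : ℝ, A.f e x ≠ 0 ∧ α x = (s : WithTop ℝ) ∧
      r = (val (A.f e x) : ℝ) - s}, (0 : ℝ) ≤ r := by
    rintro r ⟨x, s, hfx, hαx, rfl⟩
    have := key x s hfx hαx
    linarith
  have h0t : (0 : ℝ) ≤ sInf {r : ℝ | ∃ x : V, ∃ s : ℝ, A.f e x ≠ 0 ∧ α x = (s : WithTop ℝ) ∧
      r = (val (A.f e x) : ℝ) - s} := le_csInf hne hlb
  set t : ℝ := sInf {r : ℝ | ∃ x : V, ∃ s : ℝ, A.f e x ≠ 0 ∧ α x = (s : WithTop ℝ) ∧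
      r = (val (A.f e x) : ℝ) - s} with ht
  have hαe : α e = (t : WithTop ℝ) := hsde.symm
  -- idempotency gives t ≤ 0
  have hidem : α e + α e ≤ α e := by
    have := halg e e
    rwa [hee] at this
  rw [hαe] at hidem
  have htt : t + t ≤ t := by exact_mod_cast hidem
  have ht0 : t = 0 := le_antisymm (by linarith) h0t
  rw [hαe, ht0]
  rfl

end AuxLemmas

/-- a self-dual algebra norm `α` on the octonion algebra split by
`V = V⁰ ⊥ W` with `V⁰` split of dimension 2 with idempotents `e⁺, e⁻` satisfies
`α(w) = min(α(e⁺w), α(e⁻w))` for all `w ∈ W`; i.e. `α|_W` is split by the complete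
polarization `W = e⁺W ⊕ e⁻W`. -/
theorem stmt14 {F : Type*} [Field F] {V : Type*} [AddCommGroup V] [Module F V]
    (A : CompAlg F V)
    (val : F → ℤ) (hval : IsVal F val)
    (h2 : (2 : F) ≠ 0) (hval2 : val 2 = 0)
    (α : V → WithTop ℝ) (hα : IsNorm val α)
    (halg : ∀ x y : V, α x + α y ≤ α (A.mul x y))
    (hsd : IsSelfDual val A.f α)
    (ep em : V)
    (hep : A.mul ep ep = ep) (hem : A.mul em em = em)
    (hepem : A.mul ep em = 0) (hemep : A.mul em ep = 0)
    (hsum : ep + em = A.one) (hpol : A.f ep em = 1)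
    (V0 W : Submodule F V) (hV0 : V0 = Submodule.span F {ep, em})
    (hcompl : IsCompl V0 W)
    (horth : ∀ x ∈ V0, ∀ y ∈ W, A.f x y = 0)
    (π0 πW : V →ₗ[F] V)
    (hπ0 : ∀ v : V, π0 v ∈ V0) (hπW : ∀ v : V, πW v ∈ W)
    (hπ : ∀ v : V, π0 v + πW v = v)
    (hsplit : ∀ v : V, α v = min (α (π0 v)) (α (πW v))) :
    ∀ w ∈ W, α w = min (α (A.mul ep w)) (α (A.mul em w)) := by
  -- Step 1: Q ep = Q em = 0
  have hQepem : A.Q ep * A.Q em = 0 := by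
    have h := A.norm_mul ep em
    rw [hepem, QuadraticMap.map_zero] at h
    exact h.symm
  have hQepep : A.Q ep * A.Q ep = A.Q ep := by
    have h := A.norm_mul ep ep; rw [hep] at h; exact h.symm
  have hQemem : A.Q em * A.Q em = A.Q em := by
    have h := A.norm_mul em em; rw [hem] at h; exact h.symm
  have hQone : A.Q A.one * A.Q A.one = A.Q A.one := by
    have h := A.norm_mul A.one A.one; rw [A.one_mul] at h; exact h.symm
  have hQ1 : A.Q A.one = A.Q ep + A.Q em + 1 := by
    have h := hpol
    unfold CompAlg.f at h
    rw [hsum] at h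
    linear_combination h
  have hQep : A.Q ep = 0 := by
    by_contra h
    have h1 : A.Q ep = 1 := by
      have := mul_left_cancel₀ h (by rw [hQepep, mul_one] : A.Q ep * A.Q ep = A.Q ep * 1)
      exact this
    have h2' : A.Q em = 0 := by
      rw [h1, one_mul] at hQepem; exact hQepem
    rw [h1, h2'] at hQ1
    rw [hQ1] at hQone
    apply h2
    linear_combination hQone
  have hQem : A.Q em = 0 := by
    by_contra h
    have h1 : A.Q em = 1 := by
      have := mul_left_cancel₀ h (by rw [hQemem, mul_one] : A.Q em * A.Q em = A.Q em * 1)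
      exact this
    rw [h1, hQep] at hQ1
    rw [hQ1] at hQone
    apply h2
    linear_combination hQone
  -- Step 2: f values on the idempotents
  have hfepep : A.f ep ep = 0 := by
    unfold CompAlg.f
    rw [← two_smul F ep, QuadraticMap.map_smul, hQep]
    simp
  have hfemem : A.f em em = 0 := by
    unfold CompAlg.f
    rw [← two_smul F em, QuadraticMap.map_smul, hQem]
    simp
  have hfemep : A.f em ep = 1 := by
    unfold CompAlg.f at hpol ⊢
    rw [add_comm em ep]
    linear_combination hpol
  -- Step 3: span and orthogonality data
  have hspan_p : ∀ x : V, ∃ a b : F, a • ep + b • em = π0 x := by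
    intro x
    have := hπ0 x
    rw [hV0] at this
    exact Submodule.mem_span_pair.mp this
  have hspan_m : ∀ x : V, ∃ a b : F, a • em + b • ep = π0 x := by
    intro x
    obtain ⟨a, b, hab⟩ := hspan_p x
    exact ⟨b, a, by rw [add_comm]; exact hab⟩
  have hepV0 : ep ∈ V0 := by
    rw [hV0]; exact Submodule.subset_span (Set.mem_insert _ _)
  have hemV0 : em ∈ V0 := by
    rw [hV0]; exact Submodule.subset_span (Set.mem_insert_of_mem _ rfl)
  have horth_p : ∀ x : V, A.f ep (πW x) = 0 := fun x => horth ep hepV0 _ (hπW x)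
  have horth_m : ∀ x : V, A.f em (πW x) = 0 := fun x => horth em hemV0 _ (hπW x)
  -- Step 4: α ep = α em = 0
  have hαep : α ep = 0 :=
    aux_e_zero A val hval α hα halg hsd ep em hep hem hepem hfepep hpol
      π0 πW hπ hspan_p horth_p hsplit
  have hαem : α em = 0 :=
    aux_e_zero A val hval α hα halg hsd em ep hem hep hemep hfemem hfemep
      π0 πW hπ hspan_m horth_m hsplit
  -- Step 5: conclude
  intro w _
  have hw1 : A.mul ep w + A.mul em w = w := by
    rw [← A.mul_add_left, hsum, A.one_mul]
  have hge : min (α (A.mul ep w)) (α (A.mul em w)) ≤ α w := by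
    have := hα.2.1 (A.mul ep w) (A.mul em w)
    rwa [hw1] at this
  have hle1 : α w ≤ α (A.mul ep w) := by
    have := halg ep w
    rwa [hαep, zero_add] at this
  have hle2 : α w ≤ α (A.mul em w) := by
    have := halg em w
    rwa [hαem, zero_add] at this
  exact le_antisymm (le_min hle1 hle2) hge
end

section
/- Let E be an extension of a non-archimedean local field F of ramification index e, W an E-vector space with an F-bilinear symmetric form f, and Φ the E-hermitian form determined by f = Tr_{E/F} ∘ Φ. For any o_E-lattice L in W, the dual lattice with respect to f equals the dual lattice with respect to Φ: {x ∈ W : f(x, L) ⊆ 𝔭_F} = {x ∈ W : Φ(x, L) ⊆ 𝔭_E}. -/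
/-- let `E/F` be a (tamely ramified) quadratic extension of
non-archimedean local fields (residue characteristic `≠ 2`), encoded by an additive
valuation `valE` on `E` together with the key facts that `Tr(𝔭_E) ⊆ 𝔭_F` and that
`Tr(λ·o_E) ⊆ 𝔭_F` implies `λ ∈ 𝔭_E`. Let `W` be an `E`-vector space with hermitian
form `Φ` (with respect to the nontrivial `σ ∈ Gal(E/F)`) and `f = Tr_{E/F} ∘ Φ`.
Then for every `o_E`-lattice `L` in `W`, the `f`-dual lattice equals the `Φ`-dual
lattice: `{x : f(x,L) ⊆ 𝔭_F} = {x : Φ(x,L) ⊆ 𝔭_E}`. -/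
theorem stmt18 (F E : Type*) [Field F] [Field E] [Algebra F E]
    (hdeg : Module.finrank F E = 2)
    (valE : E → ℤ)
    (hvmul : ∀ x y : E, x ≠ 0 → y ≠ 0 → valE (x * y) = valE x + valE y)
    (hvadd : ∀ x y : E, x ≠ 0 → y ≠ 0 → x + y ≠ 0 → min (valE x) (valE y) ≤ valE (x + y))
    (σ : E ≃ₐ[F] E) (hσne : σ ≠ AlgEquiv.refl)
    (hσval : ∀ x : E, x ≠ 0 → valE (σ x) = valE x)
    -- `Tr(𝔭_E) ⊆ 𝔭_F`
    (htrp : ∀ x : E, x ≠ 0 → 1 ≤ valE x →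
      (Algebra.trace F E x = 0 ∨ 1 ≤ valE (algebraMap F E (Algebra.trace F E x))))
    -- `Tr(λ·o_E) ⊆ 𝔭_F → λ ∈ 𝔭_E`
    (hkey : ∀ l : E,
      (∀ a : E, (a ≠ 0 → 0 ≤ valE a) →
        (Algebra.trace F E (l * a) = 0 ∨
          1 ≤ valE (algebraMap F E (Algebra.trace F E (l * a))))) →
      (l = 0 ∨ 1 ≤ valE l))
    (W : Type*) [AddCommGroup W] [Module E W]
    (Φ : W → W → E)
    (hΦadd : ∀ x y z : W, Φ x (y + z) = Φ x y + Φ x z)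
    (hΦsmul : ∀ (a : E) (x y : W), Φ x (a • y) = σ a * Φ x y)
    -- `L` is an `o_E`-lattice in `W`
    (L : AddSubgroup W)
    (hL : ∀ a : E, (a = 0 ∨ 0 ≤ valE a) → ∀ x ∈ L, a • x ∈ L) :
    ∀ x : W,
      (∀ y ∈ L, (Algebra.trace F E (Φ x y) = 0 ∨
          1 ≤ valE (algebraMap F E (Algebra.trace F E (Φ x y)))))
        ↔ (∀ y ∈ L, (Φ x y = 0 ∨ 1 ≤ valE (Φ x y))) := by
  intro x
  constructor
  · intro h y hy
    apply hkey (Φ x y)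
    intro a ha
    have ha' : σ.symm a = 0 ∨ 0 ≤ valE (σ.symm a) := by
      by_cases h0 : a = 0
      · left; simp [h0]
      · right
        have hne : σ.symm a ≠ 0 := by
          simp only [ne_eq, EmbeddingLike.map_eq_zero_iff]; exact h0
        have hv := hσval (σ.symm a) hne
        rw [AlgEquiv.apply_symm_apply] at hv
        rw [← hv]; exact ha h0
    have hmem := hL _ ha' y hy
    have h2 := h _ hmem
    rwa [hΦsmul, AlgEquiv.apply_symm_apply, mul_comm] at h2
  · intro h y hy
    by_cases h0 : Φ x y = 0
    · left; simp [h0]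
    · rcases h y hy with h1 | h1
      · exact absurd h1 h0
      · exact htrp _ h0 h1
end
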